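/- There are exactly 25 equivalence classes of closed knight paths of length 6: the quotient of the set of closed knight paths p : ZMod 6 → ℤ × ℤ by the equivalence relation p ~ g ∘ p ∘ σ (g a board symmetry, σ a dihedral reindexing of ZMod 6) has cardinality 25. -/

import Mathlib

/-- Two cells of `ℤ × ℤ` are a knight's move apart. -/
def KnightMove (u v : ℤ × ℤ) : Prop :=
  (|u.1 - v.1| = 1 ∧ |u.2 - v.2| = 2) ∨ (|u.1 - v.1| = 2 ∧ |u.2 - v.2| = 1)

/-- A closed knight path of length `n`. -/
def IsClosedKnightPath (n : ℕ) (p : ZMod n → ℤ × ℤ) : Prop :=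
  Function.Injective p ∧ ∀ i : ZMod n, KnightMove (p i) (p (i + 1))

/-- The 90° rotation `(x, y) ↦ (-y, x)` as a `ℤ`-linear automorphism of `ℤ × ℤ`. -/
def rot90 : (ℤ × ℤ) ≃ₗ[ℤ] ℤ × ℤ where
  toFun x := (-x.2, x.1)
  invFun x := (x.2, -x.1)
  map_add' a b := by simp [Prod.ext_iff]; ring
  map_smul' m x := by simp [Prod.ext_iff]
  left_inv x := by simp
  right_inv x := by simp

/-- The reflection `(x, y) ↦ (y, x)` as a `ℤ`-linear automorphism of `ℤ × ℤ`. -/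
def reflDiag : (ℤ × ℤ) ≃ₗ[ℤ] ℤ × ℤ where
  toFun x := (x.2, x.1)
  invFun x := (x.2, x.1)
  map_add' a b := by simp [Prod.ext_iff]
  map_smul' m x := by simp [Prod.ext_iff]
  left_inv x := by simp
  right_inv x := by simp

/-- A board symmetry is a map `x ↦ A x + t` with `A` in the group generated by the
90° rotation and the reflection, and `t ∈ ℤ × ℤ`. -/
def IsBoardSymmetry (g : ℤ × ℤ → ℤ × ℤ) : Prop :=
  ∃ A ∈ Subgroup.closure ({rot90, reflDiag} : Set ((ℤ × ℤ) ≃ₗ[ℤ] ℤ × ℤ)),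
    ∃ t : ℤ × ℤ, g = fun x => A x + t

/-- A dihedral reindexing of `ZMod n`: a map `i ↦ ε i + c` with `ε = ±1`. -/
def IsDihedralReindex (n : ℕ) (σ : ZMod n → ZMod n) : Prop :=
  ∃ ε c : ZMod n, (ε = 1 ∨ ε = -1) ∧ σ = fun i => ε * i + c

/-- Two paths are equivalent if one is obtained from the other by a board symmetry
together with a dihedral reindexing. -/
def PathEquiv (n : ℕ) (p p' : ZMod n → ℤ × ℤ) : Prop :=
  ∃ g σ, IsBoardSymmetry g ∧ IsDihedralReindex n σ ∧ p' = g ∘ p ∘ σ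


/-!
Translating a closed knight path so that it starts at the origin and applying the board symmetry
that turns its first step into `(1, 2)` gives a normal form; since the eight symmetries act simply
transitively on the eight knight vectors, this normal form forgets exactly the board symmetry.
Taking the lexicographically least normal form over all `2n` dihedral reindexings therefore gives a
complete invariant of the equivalence class. For `n = 6` a normalised closed path is determined by
four more knight steps, and the invariant takes 25 values on the 204 step sequences that close up
injectively.
-/

def knightVecs : Finset (ℤ × ℤ) :=
  {(1, 2), (2, 1), (2, -1), (1, -2), (-1, -2), (-2, -1), (-2, 1), (-1, 2)}

theorem knightMove_iff_sub_mem {u v : ℤ × ℤ} : KnightMove u v ↔ v - u ∈ knightVecs := by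
  obtain ⟨w, rfl⟩ : ∃ w, v = u + w := ⟨v - u, by abel⟩
  have h1 : ∀ a : ℤ, |a| = 1 ↔ a = 1 ∨ a = -1 := fun a => abs_eq zero_le_one
  have h2 : ∀ a : ℤ, |a| = 2 ↔ a = 2 ∨ a = -2 := fun a => abs_eq zero_le_two
  simp only [KnightMove, Prod.fst_add, Prod.snd_add, sub_add_cancel_left, abs_neg, h1, h2,
    add_sub_cancel_left, knightVecs, Finset.mem_insert, Finset.mem_singleton, Prod.ext_iff]
  omega

theorem KnightMove.symm {u v : ℤ × ℤ} (h : KnightMove u v) : KnightMove v u := by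
  unfold KnightMove at h ⊢
  rwa [abs_sub_comm v.1, abs_sub_comm v.2]

def IsSignedPerm (f : ℤ × ℤ → ℤ × ℤ) : Prop :=
  ∃ a b : ℤ, |a| = 1 ∧ |b| = 1 ∧
    (f = (fun x => (a * x.1, b * x.2)) ∨ f = (fun x => (a * x.2, b * x.1)))

theorem IsSignedPerm.comp {f g : ℤ × ℤ → ℤ × ℤ} (hf : IsSignedPerm f) (hg : IsSignedPerm g) :
    IsSignedPerm (f ∘ g) := by
  obtain ⟨a, b, ha, hb, rfl | rfl⟩ := hf <;> obtain ⟨c, d, hc, hd, rfl | rfl⟩ := hg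
  · exact ⟨a * c, b * d, by simp [abs_mul, ha, hc], by simp [abs_mul, hb, hd],
      .inl (funext fun x => by simp [mul_assoc])⟩
  · exact ⟨a * c, b * d, by simp [abs_mul, ha, hc], by simp [abs_mul, hb, hd],
      .inr (funext fun x => by simp [mul_assoc])⟩
  · exact ⟨a * d, b * c, by simp [abs_mul, ha, hd], by simp [abs_mul, hb, hc],
      .inr (funext fun x => by simp [mul_assoc])⟩
  · exact ⟨a * d, b * c, by simp [abs_mul, ha, hd], by simp [abs_mul, hb, hc],
      .inl (funext fun x => by simp [mul_assoc])⟩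

theorem IsSignedPerm.mapsTo_knightVecs {f : ℤ × ℤ → ℤ × ℤ} (hf : IsSignedPerm f) :
    Set.MapsTo f knightVecs knightVecs := by
  obtain ⟨a, b, ha, hb, rfl | rfl⟩ := hf <;>
  rcases (abs_eq zero_le_one).1 ha with rfl | rfl <;>
  rcases (abs_eq zero_le_one).1 hb with rfl | rfl <;> decide

theorem isSignedPerm_iff {f : ℤ × ℤ → ℤ × ℤ} :
    IsSignedPerm f ↔ ∃ A ∈ Subgroup.closure {rot90, reflDiag}, ⇑A = f := by
  set D := Subgroup.closure ({rot90, reflDiag} : Set ((ℤ × ℤ) ≃ₗ[ℤ] ℤ × ℤ))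
  have hr : rot90 ∈ D := Subgroup.subset_closure (by simp)
  have hs : reflDiag ∈ D := Subgroup.subset_closure (by simp)
  constructor
  · rintro ⟨a, b, ha, hb, rfl | rfl⟩ <;>
    rcases (abs_eq zero_le_one).1 ha with rfl | rfl <;>
    rcases (abs_eq zero_le_one).1 hb with rfl | rfl
    exacts [⟨1, one_mem _, funext fun x => by simp⟩,
      ⟨reflDiag * rot90, mul_mem hs hr, funext fun x => by simp [rot90, reflDiag]⟩,
      ⟨rot90 * reflDiag, mul_mem hr hs, funext fun x => by simp [rot90, reflDiag]⟩,
      ⟨rot90 * rot90, mul_mem hr hr, funext fun x => by simp [rot90]⟩,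
      ⟨reflDiag, hs, funext fun x => by simp [reflDiag]⟩,
      ⟨rot90⁻¹, inv_mem hr, funext fun x => by simp [rot90]⟩,
      ⟨rot90, hr, funext fun x => by simp [rot90]⟩,
      ⟨rot90 * rot90 * reflDiag, mul_mem (mul_mem hr hr) hs,
        funext fun x => by simp [rot90, reflDiag]⟩]
  · rintro ⟨A, hA, rfl⟩
    induction hA using Subgroup.closure_induction'' with
    | mem x hx =>
      rcases hx with rfl | rfl
      exacts [⟨-1, 1, by simp, by simp, .inr (funext fun x => by simp [rot90])⟩,
        ⟨1, 1, by simp, by simp, .inr (funext fun x => by simp [reflDiag])⟩]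
    | inv_mem x hx =>
      rcases hx with rfl | rfl
      exacts [⟨1, -1, by simp, by simp, .inr (funext fun x => by simp [rot90])⟩,
        ⟨1, 1, by simp, by simp, .inr (funext fun x => by simp [reflDiag])⟩]
    | one => exact ⟨1, 1, by simp, by simp, .inl (funext fun x => by simp)⟩
    | mul x y _ _ hx hy => exact hx.comp hy

theorem IsBoardSymmetry.knightMove {g : ℤ × ℤ → ℤ × ℤ} (hg : IsBoardSymmetry g)
    {u v : ℤ × ℤ} (h : KnightMove u v) : KnightMove (g u) (g v) := by
  obtain ⟨A, hA, t, rfl⟩ := hg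
  rw [knightMove_iff_sub_mem] at h ⊢
  rw [add_sub_add_right_eq_sub, ← map_sub]
  exact (isSignedPerm_iff.2 ⟨A, hA, rfl⟩).mapsTo_knightVecs h

theorem IsBoardSymmetry.injective {g : ℤ × ℤ → ℤ × ℤ} (hg : IsBoardSymmetry g) :
    Function.Injective g := by
  obtain ⟨A, -, t, rfl⟩ := hg
  exact (add_left_injective t).comp A.injective

section Reindex

variable {n : ℕ}

def dihedralReindex (s : Bool × ZMod n) (i : ZMod n) : ZMod n := (if s.1 then i else -i) + s.2

theorem isDihedralReindex_iff {σ : ZMod n → ZMod n} :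
    IsDihedralReindex n σ ↔ ∃ s, σ = dihedralReindex s := by
  constructor
  · rintro ⟨ε, c, rfl | rfl, rfl⟩
    exacts [⟨(true, c), funext fun i => by simp [dihedralReindex]⟩,
      ⟨(false, c), funext fun i => by simp [dihedralReindex]⟩]
  · rintro ⟨⟨_ | _, c⟩, rfl⟩
    exacts [⟨-1, c, .inr rfl, funext fun i => by simp [dihedralReindex]⟩,
      ⟨1, c, .inl rfl, funext fun i => by simp [dihedralReindex]⟩]

theorem IsDihedralReindex.comp {σ τ : ZMod n → ZMod n} (hσ : IsDihedralReindex n σ)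
    (hτ : IsDihedralReindex n τ) : IsDihedralReindex n (σ ∘ τ) := by
  obtain ⟨ε, c, hε, rfl⟩ := hσ
  obtain ⟨δ, d, hδ, rfl⟩ := hτ
  refine ⟨ε * δ, ε * d + c, ?_, funext fun i => by simp only [Function.comp_apply]; ring⟩
  rcases hε with rfl | rfl <;> rcases hδ with rfl | rfl <;> simp

theorem IsDihedralReindex.knightMove {p : ZMod n → ℤ × ℤ}
    (hp : ∀ i, KnightMove (p i) (p (i + 1))) {σ : ZMod n → ZMod n}
    (hσ : IsDihedralReindex n σ) (i : ZMod n) : KnightMove (p (σ i)) (p (σ (i + 1))) := by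
  obtain ⟨ε, c, rfl | rfl, rfl⟩ := hσ
  · simpa [add_right_comm] using hp (i + c)
  · simpa [mul_add, add_right_comm] using (hp (-1 * (i + 1) + c)).symm

theorem IsDihedralReindex.injective {σ : ZMod n → ZMod n} (hσ : IsDihedralReindex n σ) :
    Function.Injective σ := by
  obtain ⟨ε, c, hε, rfl⟩ := hσ
  intro i j h
  rcases hε with rfl | rfl <;> simpa using h

end Reindex

section PathEquiv

variable {n : ℕ} {p q r : ZMod n → ℤ × ℤ}

theorem PathEquiv.symm (h : PathEquiv n p q) : PathEquiv n q p := by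
  obtain ⟨g, σ, ⟨A, hA, t, rfl⟩, ⟨ε, c, hε, rfl⟩, rfl⟩ := h
  refine ⟨fun x => A⁻¹ x + -(A.symm t), fun i => ε * i + -(ε * c),
    ⟨A⁻¹, inv_mem hA, -(A.symm t), rfl⟩, ⟨ε, -(ε * c), hε, rfl⟩, funext fun i => ?_⟩
  have hσ : ε * (ε * i + -(ε * c)) + c = i := by rcases hε with rfl | rfl <;> ring
  simp only [Function.comp_apply, hσ]
  show p i = A.symm (A (p i) + t) + -(A.symm t)
  rw [map_add, LinearEquiv.symm_apply_apply, add_neg_cancel_right]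

theorem PathEquiv.trans (h₁ : PathEquiv n p q) (h₂ : PathEquiv n q r) : PathEquiv n p r := by
  obtain ⟨g, σ, ⟨A, hA, t, rfl⟩, hσ, rfl⟩ := h₁
  obtain ⟨g', τ, ⟨B, hB, t', rfl⟩, hτ, rfl⟩ := h₂
  refine ⟨fun x => (B * A) x + (B t + t'), σ ∘ τ, ⟨B * A, mul_mem hB hA, _, rfl⟩, hσ.comp hτ,
    funext fun i => ?_⟩
  simp only [Function.comp_apply, map_add, add_assoc]
  rfl

theorem pathEquiv_comp {σ : ZMod n → ZMod n} (hσ : IsDihedralReindex n σ) :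
    PathEquiv n p (p ∘ σ) :=
  ⟨id, σ, ⟨1, one_mem _, 0, by simp [Function.id_def]⟩, hσ, rfl⟩

theorem IsClosedKnightPath.of_pathEquiv (hp : IsClosedKnightPath n p) (h : PathEquiv n p q) :
    IsClosedKnightPath n q := by
  obtain ⟨g, σ, hg, hσ, rfl⟩ := h
  exact ⟨hg.injective.comp (hp.1.comp hσ.injective), fun i => hg.knightMove (hσ.knightMove hp.2 i)⟩

end PathEquiv

/-- For a knight vector `v`, the signed permutation of coordinates sending `v` to `(1, 2)`. -/
def align (v x : ℤ × ℤ) : ℤ × ℤ :=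
  if |v.1| = 1 then (v.1.sign * x.1, v.2.sign * x.2) else (v.2.sign * x.2, v.1.sign * x.1)

theorem align_self : ∀ v ∈ knightVecs, align v v = (1, 2) := by decide

theorem isSignedPerm_align {v : ℤ × ℤ} (hv : v ∈ knightVecs) : IsSignedPerm (align v) := by
  have h₁ : v.1 ≠ 0 := by revert v; decide
  have h₂ : v.2 ≠ 0 := by revert v; decide
  unfold align
  split_ifs
  · exact ⟨_, _, Int.abs_sign_of_ne_zero h₁, Int.abs_sign_of_ne_zero h₂, .inl rfl⟩
  · exact ⟨_, _, Int.abs_sign_of_ne_zero h₂, Int.abs_sign_of_ne_zero h₁, .inr rfl⟩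

theorem IsSignedPerm.align_apply_apply {f : ℤ × ℤ → ℤ × ℤ} (hf : IsSignedPerm f) {v : ℤ × ℤ}
    (hv : v ∈ knightVecs) (x : ℤ × ℤ) : align (f v) (f x) = align v x := by
  simp only [knightVecs, Finset.mem_insert, Finset.mem_singleton] at hv
  obtain ⟨a, b, ha, hb, rfl | rfl⟩ := hf <;>
  rcases (abs_eq zero_le_one).1 ha with rfl | rfl <;>
  rcases (abs_eq zero_le_one).1 hb with rfl | rfl <;>
  rcases hv with rfl | rfl | rfl | rfl | rfl | rfl | rfl | rfl <;>
  simp [align]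

section Normalize

variable {n : ℕ} {p q : ZMod n → ℤ × ℤ}

def normalizedPath (p : ZMod n → ℤ × ℤ) (i : ZMod n) : ℤ × ℤ := align (p 1 - p 0) (p i - p 0)

theorem pathEquiv_normalizedPath (h : KnightMove (p 0) (p 1)) :
    PathEquiv n p (normalizedPath p) := by
  obtain ⟨A, hA, hAv⟩ := isSignedPerm_iff.1 (isSignedPerm_align (knightMove_iff_sub_mem.1 h))
  refine ⟨fun x => A x + -A (p 0), id, ⟨A, hA, _, rfl⟩, ⟨1, 0, .inl rfl, by simp [Function.id_def]⟩,
    funext fun i => ?_⟩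
  show align (p 1 - p 0) (p i - p 0) = _
  rw [← hAv, map_sub, sub_eq_add_neg]
  rfl

theorem normalizedPath_comp {g : ℤ × ℤ → ℤ × ℤ} (hg : IsBoardSymmetry g)
    (h : KnightMove (p 0) (p 1)) : normalizedPath (g ∘ p) = normalizedPath p := by
  obtain ⟨A, hA, t, rfl⟩ := hg
  funext i
  simp only [normalizedPath, Function.comp_apply, add_sub_add_right_eq_sub, ← map_sub]
  exact (isSignedPerm_iff.2 ⟨A, hA, rfl⟩).align_apply_apply (knightMove_iff_sub_mem.1 h) _

theorem normalizedPath_zero : normalizedPath p 0 = 0 := by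
  simp [normalizedPath, align]

theorem normalizedPath_one (h : KnightMove (p 0) (p 1)) : normalizedPath p 1 = (1, 2) :=
  align_self _ (knightMove_iff_sub_mem.1 h)

theorem IsClosedKnightPath.knightMove_zero_one (hp : IsClosedKnightPath n p) :
    KnightMove (p 0) (p 1) := by
  simpa using hp.2 0

theorem IsClosedKnightPath.comp_dihedralReindex (hp : IsClosedKnightPath n p) (s : Bool × ZMod n) :
    IsClosedKnightPath n (p ∘ dihedralReindex s) :=
  hp.of_pathEquiv (pathEquiv_comp (isDihedralReindex_iff.2 ⟨s, rfl⟩))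

def pathCode (q : ZMod n → ℤ × ℤ) : List (ℤ ×ₗ ℤ) :=
  List.ofFn fun i : Fin n => toLex (q (i : ℕ))

theorem pathCode_injective [NeZero n] : Function.Injective (pathCode (n := n)) := by
  intro q q' h
  funext j
  have := congrFun (List.ofFn_injective h) ⟨j.val, j.val_lt⟩
  simpa [ZMod.natCast_zmod_val] using this

def canonicalCode [NeZero n] (p : ZMod n → ℤ × ℤ) : List (ℤ ×ₗ ℤ) :=
  Finset.univ.inf' Finset.univ_nonempty fun s => pathCode (normalizedPath (p ∘ dihedralReindex s))

theorem canonicalCode_le_of_pathEquiv [NeZero n] (hp : IsClosedKnightPath n p)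
    (h : PathEquiv n p q) : canonicalCode p ≤ canonicalCode q := by
  obtain ⟨g, σ, hg, hσ, rfl⟩ := h
  refine Finset.le_inf' _ _ fun s _ => ?_
  obtain ⟨s', hs'⟩ := isDihedralReindex_iff.1 (hσ.comp (isDihedralReindex_iff.2 ⟨s, rfl⟩))
  have hgs : (g ∘ p ∘ σ) ∘ dihedralReindex s = g ∘ (p ∘ dihedralReindex s') := by rw [← hs']; rfl
  rw [hgs, normalizedPath_comp hg (hp.comp_dihedralReindex s').knightMove_zero_one]
  exact Finset.inf'_le _ (Finset.mem_univ s')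

theorem pathEquiv_iff_canonicalCode_eq [NeZero n] (hp : IsClosedKnightPath n p)
    (hq : IsClosedKnightPath n q) : PathEquiv n p q ↔ canonicalCode p = canonicalCode q := by
  refine ⟨fun h => le_antisymm (canonicalCode_le_of_pathEquiv hp h)
    (canonicalCode_le_of_pathEquiv hq h.symm), fun h => ?_⟩
  obtain ⟨s, -, hs⟩ := Finset.exists_mem_eq_inf' Finset.univ_nonempty
    fun s => pathCode (normalizedPath (p ∘ dihedralReindex s))
  obtain ⟨s', -, hs'⟩ := Finset.exists_mem_eq_inf' Finset.univ_nonempty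
    fun s => pathCode (normalizedPath (q ∘ dihedralReindex s))
  have hpq : normalizedPath (p ∘ dihedralReindex s) = normalizedPath (q ∘ dihedralReindex s') :=
    pathCode_injective (hs.symm.trans (h.trans hs'))
  have hp' := pathEquiv_normalizedPath (hp.comp_dihedralReindex s).knightMove_zero_one
  have hq' := pathEquiv_normalizedPath (hq.comp_dihedralReindex s').knightMove_zero_one
  rw [← hpq] at hq'
  exact ((pathEquiv_comp (isDihedralReindex_iff.2 ⟨s, rfl⟩)).trans hp').trans
    (hq'.symm.trans (pathEquiv_comp (isDihedralReindex_iff.2 ⟨s', rfl⟩)).symm)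

end Normalize

/-- A closed knight path of length 6 through `0` and `(1, 2)` is determined by its next four
steps; `closedSteps` lists those steps for which the sixth step returns to `0` and the path is
injective. -/
def pathOfSteps (w : (ℤ × ℤ) × (ℤ × ℤ) × (ℤ × ℤ) × (ℤ × ℤ)) : ZMod 6 → ℤ × ℤ :=
  ![0, (1, 2), (1, 2) + w.1, (1, 2) + w.1 + w.2.1, (1, 2) + w.1 + w.2.1 + w.2.2.1,
    (1, 2) + w.1 + w.2.1 + w.2.2.1 + w.2.2.2]

def closedSteps : Finset ((ℤ × ℤ) × (ℤ × ℤ) × (ℤ × ℤ) × (ℤ × ℤ)) :=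
  (knightVecs ×ˢ knightVecs ×ˢ knightVecs ×ˢ knightVecs).filter
    fun w => -pathOfSteps w 5 ∈ knightVecs ∧ Function.Injective (pathOfSteps w)

theorem isClosedKnightPath_pathOfSteps {w : (ℤ × ℤ) × (ℤ × ℤ) × (ℤ × ℤ) × (ℤ × ℤ)}
    (hw : w ∈ closedSteps) : IsClosedKnightPath 6 (pathOfSteps w) := by
  simp only [closedSteps, Finset.mem_filter, Finset.mem_product] at hw
  obtain ⟨⟨ha, hb, hc, hd⟩, h5, hinj⟩ := hw
  refine ⟨hinj, fun i => knightMove_iff_sub_mem.2 ?_⟩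
  fin_cases i
  · exact (by decide : ((1, 2) : ℤ × ℤ) - 0 ∈ knightVecs)
  · show (1, 2) + w.1 - (1, 2) ∈ knightVecs
    simpa using ha
  · show (1, 2) + w.1 + w.2.1 - ((1, 2) + w.1) ∈ knightVecs
    simpa using hb
  · show (1, 2) + w.1 + w.2.1 + w.2.2.1 - ((1, 2) + w.1 + w.2.1) ∈ knightVecs
    simpa using hc
  · show (1, 2) + w.1 + w.2.1 + w.2.2.1 + w.2.2.2 - ((1, 2) + w.1 + w.2.1 + w.2.2.1) ∈ knightVecs
    simpa using hd
  · show 0 - pathOfSteps w 5 ∈ knightVecs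
    simpa using h5

theorem exists_mem_closedSteps {q : ZMod 6 → ℤ × ℤ} (hq : IsClosedKnightPath 6 q)
    (h0 : q 0 = 0) (h1 : q 1 = (1, 2)) : ∃ w ∈ closedSteps, pathOfSteps w = q := by
  have step (i : ZMod 6) : q (i + 1) - q i ∈ knightVecs := knightMove_iff_sub_mem.1 (hq.2 i)
  have hw : pathOfSteps (q 2 - q 1, q 3 - q 2, q 4 - q 3, q 5 - q 4) = q := by
    funext i
    fin_cases i
    · exact h0.symm
    · exact h1.symm
    all_goals simp [pathOfSteps, h1]; rfl
  refine ⟨_, ?_, hw⟩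
  simp only [closedSteps, Finset.mem_filter, Finset.mem_product, hw]
  refine ⟨⟨step 1, step 2, step 3, step 4⟩, ?_, hq.1⟩
  simpa [h0, show (5 + 1 : ZMod 6) = 0 from rfl] using step 5

theorem range_canonicalCode :
    Set.range (fun p : {p // IsClosedKnightPath 6 p} => canonicalCode p.1) =
      closedSteps.image fun w => canonicalCode (pathOfSteps w) := by
  ext c
  simp only [Set.mem_range, Finset.coe_image, Set.mem_image, Finset.mem_coe, Subtype.exists]
  constructor
  · rintro ⟨p, hp, rfl⟩
    have hn := pathEquiv_normalizedPath hp.knightMove_zero_one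
    have hn' := hp.of_pathEquiv hn
    obtain ⟨w, hw, hwp⟩ := exists_mem_closedSteps hn' normalizedPath_zero
      (normalizedPath_one hp.knightMove_zero_one)
    exact ⟨w, hw, hwp ▸ ((pathEquiv_iff_canonicalCode_eq hp hn').1 hn).symm⟩
  · rintro ⟨w, hw, rfl⟩
    exact ⟨_, isClosedKnightPath_pathOfSteps hw, rfl⟩

theorem card_image_canonicalCode_closedSteps :
    (closedSteps.image fun w => canonicalCode (pathOfSteps w)).card = 25 := by
  decide +kernel

/-- There are exactly 25 equivalence classes of closed knight paths of length 6. -/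
theorem count_closedKnightPaths_length_6 :
    Nat.card (Quot (fun p q : {p : ZMod 6 → ℤ × ℤ // IsClosedKnightPath 6 p} =>
      PathEquiv 6 p.1 q.1)) = 25 := by
  let f (p : {p : ZMod 6 → ℤ × ℤ // IsClosedKnightPath 6 p}) := canonicalCode p.1
  have hrel : (fun p q : {p // IsClosedKnightPath 6 p} => PathEquiv 6 p.1 q.1) = Setoid.ker f := by
    funext p q
    exact propext (pathEquiv_iff_canonicalCode_eq p.2 q.2)
  calc Nat.card (Quot _) = Nat.card (Quotient (Setoid.ker f)) := by rw [hrel]; rfl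
    _ = Nat.card (Set.range f) := Nat.card_congr (Setoid.quotientKerEquivRange f)
    _ = 25 := by
      rw [range_canonicalCode, Nat.card_coe_set_eq, Set.ncard_coe_finset,
        card_image_canonicalCode_closedSteps]
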